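/- A Banach space X is LUR if and only if X is rotund, strongly locally U-convex, and satisfies the property (HS). -/

import Mathlib

open Metric Filter Topology NormedSpace

noncomputable section

/-- The face `S(X, f, 0) = {y ∈ B_X : f(y) = 1}` determined by a functional `f`. -/
def face (X : Type*) [NormedAddCommGroup X] [NormedSpace ℝ X] (f : X →L[ℝ] ℝ) : Set X :=
  {y | ‖y‖ ≤ 1 ∧ f y = 1}

/-- Property (HS). -/
def HSProp (X : Type*) [NormedAddCommGroup X] [NormedSpace ℝ X] : Prop :=
  ∀ f : X →L[ℝ] ℝ, ‖f‖ = 1 → (face X f).Nonempty →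
    ∀ xs : ℕ → X, (∀ n, ‖xs n‖ ≤ 1) →
      Tendsto (fun n => f (xs n)) atTop (𝓝 1) →
      Tendsto (fun n => infDist (xs n) (face X f)) atTop (𝓝 0)

/-- Property (HLUR). -/
def HLUR (X : Type*) [NormedAddCommGroup X] [NormedSpace ℝ X] : Prop :=
  ∀ x : X, ‖x‖ = 1 → ∀ xs : ℕ → X, (∀ n, ‖xs n‖ = 1) →
    Tendsto (fun n => ‖xs n + x‖) atTop (𝓝 2) →
    ∀ f : X →L[ℝ] ℝ, ‖f‖ = 1 → f x = 1 →
      Tendsto (fun n => infDist (xs n) (face X f)) atTop (𝓝 0)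

/-- Local uniform rotundity. -/
def LUR (X : Type*) [NormedAddCommGroup X] [NormedSpace ℝ X] : Prop :=
  ∀ x : X, ‖x‖ = 1 → ∀ xs : ℕ → X, (∀ n, ‖xs n‖ = 1) →
    Tendsto (fun n => ‖xs n + x‖) atTop (𝓝 2) → Tendsto xs atTop (𝓝 x)

/-- Compact local uniform rotundity. -/
def CLUR (X : Type*) [NormedAddCommGroup X] [NormedSpace ℝ X] : Prop :=
  ∀ x : X, ‖x‖ = 1 → ∀ xs : ℕ → X, (∀ n, ‖xs n‖ = 1) →
    Tendsto (fun n => ‖xs n + x‖) atTop (𝓝 2) →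
    ∃ φ : ℕ → ℕ, StrictMono φ ∧ ∃ z : X, Tendsto (xs ∘ φ) atTop (𝓝 z)

/-- Local U-convexity. -/
def LocallyUConvex (X : Type*) [NormedAddCommGroup X] [NormedSpace ℝ X] : Prop :=
  ∀ x : X, ‖x‖ = 1 → ∀ xs : ℕ → X, (∀ n, ‖xs n‖ = 1) →
    Tendsto (fun n => ‖xs n + x‖) atTop (𝓝 2) →
    ∃ f : X →L[ℝ] ℝ, ‖f‖ = 1 ∧ f x = 1 ∧ Tendsto (fun n => f (xs n)) atTop (𝓝 1)

/-- Strong local U-convexity. -/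
def StronglyLocallyUConvex (X : Type*) [NormedAddCommGroup X] [NormedSpace ℝ X] : Prop :=
  ∀ x : X, ‖x‖ = 1 → ∀ xs : ℕ → X, (∀ n, ‖xs n‖ = 1) →
    Tendsto (fun n => ‖xs n + x‖) atTop (𝓝 2) →
    ∀ f : X →L[ℝ] ℝ, ‖f‖ = 1 → f x = 1 → Tendsto (fun n => f (xs n)) atTop (𝓝 1)

/-- Rotundity (strict convexity): every face has at most one element. -/
def Rotund (X : Type*) [NormedAddCommGroup X] [NormedSpace ℝ X] : Prop :=
  ∀ f : X →L[ℝ] ℝ, ‖f‖ = 1 → (face X f).Subsingleton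

/-- Near strict convexity: every face is norm-compact. -/
def NSC (X : Type*) [NormedAddCommGroup X] [NormedSpace ℝ X] : Prop :=
  ∀ f : X →L[ℝ] ℝ, ‖f‖ = 1 → IsCompact (face X f)

/-- Kadets-Klee property. -/
def KadetsKlee (X : Type*) [NormedAddCommGroup X] [NormedSpace ℝ X] : Prop :=
  ∀ (xs : ℕ → X) (x : X),
    (∀ f : X →L[ℝ] ℝ, Tendsto (fun n => f (xs n)) atTop (𝓝 (f x))) →
    Tendsto (fun n => ‖xs n‖) atTop (𝓝 ‖x‖) → Tendsto xs atTop (𝓝 x)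

/-- Alternatively convex or smooth. -/
def ACS (X : Type*) [NormedAddCommGroup X] [NormedSpace ℝ X] : Prop :=
  ∀ x y : X, ‖x‖ = 1 → ‖y‖ = 1 → ∀ f : X →L[ℝ] ℝ, ‖f‖ = 1 →
    ‖x + y‖ = 2 → f x = 1 → f y = 1

/-- Smoothness: each unit vector has a unique norming functional. -/
def SmoothSpace (X : Type*) [NormedAddCommGroup X] [NormedSpace ℝ X] : Prop :=
  ∀ x : X, ‖x‖ = 1 → ∃! f : X →L[ℝ] ℝ, ‖f‖ = 1 ∧ f x = 1

/-- Reflexivity of a normed space. -/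
def ReflexiveSpace (X : Type*) [NormedAddCommGroup X] [NormedSpace ℝ X] : Prop :=
  Function.Surjective (inclusionInDoubleDual ℝ X)

/-- Strong rotundity: reflexive, rotund and Kadets-Klee. -/
def StronglyRotund (X : Type*) [NormedAddCommGroup X] [NormedSpace ℝ X] : Prop :=
  ReflexiveSpace X ∧ Rotund X ∧ KadetsKlee X

/-
For LUR ⇒ (HS): a sequence in the ball on which a norm-one functional tends to 1 has norms tending
to 1 and, added to any point `e` of the face, norms tending to 2; normalising it costs a vanishing
distance, so LUR at `e` forces it to converge to `e`. The other two properties are immediate.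
Conversely, with `f` a norming functional of a unit vector `x`, strong local U-convexity gives
`f xₙ → 1`, (HS) then gives `d(xₙ, S(X, f, 0)) → 0`, and rotundity makes that face `{x}`.
-/

section

variable {X : Type*} [NormedAddCommGroup X] [NormedSpace ℝ X]

theorem apply_le_norm_of_opNorm_le_one {f : X →L[ℝ] ℝ} (hf : ‖f‖ ≤ 1) (y : X) : f y ≤ ‖y‖ :=
  (le_abs_self _).trans <| (f.le_of_opNorm_le hf y).trans_eq (one_mul _)

theorem norm_eq_one_of_mem_face {f : X →L[ℝ] ℝ} (hf : ‖f‖ ≤ 1) {y : X} (hy : y ∈ face X f) :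
    ‖y‖ = 1 :=
  le_antisymm hy.1 (hy.2 ▸ apply_le_norm_of_opNorm_le_one hf y)

theorem Rotund.face_eq_singleton (hR : Rotund X) {f : X →L[ℝ] ℝ} (hf : ‖f‖ = 1) {x : X}
    (hx : x ∈ face X f) : face X f = {x} :=
  Set.eq_singleton_iff_unique_mem.mpr ⟨hx, fun _ hy => hR f hf hy hx⟩

theorem tendsto_norm_of_tendsto_apply {f : X →L[ℝ] ℝ} (hf : ‖f‖ ≤ 1) {xs : ℕ → X}
    (hxs : ∀ n, ‖xs n‖ ≤ 1) (hlim : Tendsto (fun n => f (xs n)) atTop (𝓝 1)) :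
    Tendsto (fun n => ‖xs n‖) atTop (𝓝 1) :=
  tendsto_of_tendsto_of_tendsto_of_le_of_le hlim tendsto_const_nhds
    (fun n => apply_le_norm_of_opNorm_le_one hf (xs n)) hxs

theorem tendsto_norm_add_of_tendsto_apply {f : X →L[ℝ] ℝ} (hf : ‖f‖ ≤ 1) {e : X}
    (he : e ∈ face X f) {xs : ℕ → X} (hxs : ∀ n, ‖xs n‖ ≤ 1)
    (hlim : Tendsto (fun n => f (xs n)) atTop (𝓝 1)) :
    Tendsto (fun n => ‖xs n + e‖) atTop (𝓝 2) := by
  have hlower : Tendsto (fun n => f (xs n) + 1) atTop (𝓝 2) := by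
    simpa [one_add_one_eq_two] using hlim.add_const 1
  refine tendsto_of_tendsto_of_tendsto_of_le_of_le hlower tendsto_const_nhds (fun n => ?_)
    (fun n => ?_)
  · simpa [he.2] using apply_le_norm_of_opNorm_le_one hf (xs n + e)
  · calc ‖xs n + e‖ ≤ ‖xs n‖ + ‖e‖ := norm_add_le _ _
      _ ≤ 1 + 1 := add_le_add (hxs n) he.1
      _ = 2 := one_add_one_eq_two

/-- Normalising `v` moves it by `|1 - ‖v‖|`; for `v = 0` the unit vector `x` serves instead. -/
theorem exists_norm_eq_one_dist_eq {x : X} (hx : ‖x‖ = 1) (v : X) :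
    ∃ u : X, ‖u‖ = 1 ∧ dist u v = |1 - ‖v‖| := by
  rcases eq_or_ne v 0 with rfl | hv
  · exact ⟨x, hx, by simp [hx]⟩
  · have hv' : ‖v‖ ≠ 0 := norm_ne_zero_iff.mpr hv
    refine ⟨‖v‖⁻¹ • v, by rw [norm_smul, norm_inv, norm_norm, inv_mul_cancel₀ hv'], ?_⟩
    calc dist (‖v‖⁻¹ • v) v = ‖(‖v‖⁻¹ - 1) • v‖ := by rw [dist_eq_norm, sub_smul, one_smul]
      _ = |1 - ‖v‖| := by
        have h : (‖v‖⁻¹ - 1) * ‖v‖ = 1 - ‖v‖ := by rw [sub_mul, inv_mul_cancel₀ hv', one_mul]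
        rw [norm_smul, Real.norm_eq_abs, ← h, abs_mul, abs_norm]

theorem LUR.tendsto_of_tendsto_norm (hL : LUR X) {x : X} (hx : ‖x‖ = 1) {xs : ℕ → X}
    (hnorm : Tendsto (fun n => ‖xs n‖) atTop (𝓝 1))
    (hlim : Tendsto (fun n => ‖xs n + x‖) atTop (𝓝 2)) : Tendsto xs atTop (𝓝 x) := by
  choose ys hys hdist using fun n => exists_norm_eq_one_dist_eq hx (xs n)
  have hclose : Tendsto (fun n => dist (ys n) (xs n)) atTop (𝓝 0) := by
    simpa [hdist] using (hnorm.const_sub 1).abs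
  have hys_add : Tendsto (fun n => ‖ys n + x‖) atTop (𝓝 2) := by
    refine hlim.congr_dist (squeeze_zero (g := fun n => dist (xs n + x) (ys n + x))
      (fun _ => dist_nonneg) (fun n => ?_) ?_)
    · exact (dist_norm_norm_le _ _).trans_eq (dist_eq_norm _ _).symm
    · simpa [dist_add_right, dist_comm] using hclose
  exact (hL x hx ys hys hys_add).congr_dist hclose

theorem LUR.rotund (hL : LUR X) : Rotund X := by
  intro f hf y hy z hz
  have hsum : Tendsto (fun _ : ℕ => ‖y + z‖) atTop (𝓝 2) :=
    tendsto_norm_add_of_tendsto_apply hf.le hz (fun _ => hy.1) (by simp [hy.2])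
  exact tendsto_nhds_unique tendsto_const_nhds
    (hL z (norm_eq_one_of_mem_face hf.le hz) _ (fun _ => norm_eq_one_of_mem_face hf.le hy) hsum)

theorem LUR.stronglyLocallyUConvex (hL : LUR X) : StronglyLocallyUConvex X :=
  fun x hx xs hxs hlim f _ hfx => hfx ▸ (f.continuous.tendsto x).comp (hL x hx xs hxs hlim)

theorem LUR.hsProp (hL : LUR X) : HSProp X := by
  rintro f hf ⟨e, he⟩ xs hxs hlim
  have hxe : Tendsto xs atTop (𝓝 e) :=
    hL.tendsto_of_tendsto_norm (norm_eq_one_of_mem_face hf.le he)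
      (tendsto_norm_of_tendsto_apply hf.le hxs hlim)
      (tendsto_norm_add_of_tendsto_apply hf.le he hxs hlim)
  exact squeeze_zero (fun _ => infDist_nonneg) (fun n => infDist_le_dist_of_mem he)
    (tendsto_iff_dist_tendsto_zero.mp hxe)

end

theorem lur_iff_rotund_sluc_hs_general (X : Type*) [NormedAddCommGroup X] [NormedSpace ℝ X] :
    LUR X ↔ Rotund X ∧ StronglyLocallyUConvex X ∧ HSProp X := by
  refine ⟨fun hL => ⟨hL.rotund, hL.stronglyLocallyUConvex, hL.hsProp⟩, ?_⟩
  rintro ⟨hR, hS, hH⟩ x hx xs hxs hlim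
  obtain ⟨f, hf, hfx⟩ := exists_dual_vector ℝ x (norm_ne_zero_iff.mp (by simp [hx]))
  have hxface : x ∈ face X f := ⟨hx.le, by simp [hfx, hx]⟩
  have hdist : Tendsto (fun n => infDist (xs n) (face X f)) atTop (𝓝 0) :=
    hH f hf ⟨x, hxface⟩ xs (fun n => (hxs n).le) (hS x hx xs hxs hlim f hf hxface.2)
  rw [hR.face_eq_singleton hf hxface] at hdist
  simpa [tendsto_iff_dist_tendsto_zero] using hdist

theorem lur_iff_rotund_sluc_hs (X : Type*) [NormedAddCommGroup X] [NormedSpace ℝ X]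
    [CompleteSpace X] :
    LUR X ↔ Rotund X ∧ StronglyLocallyUConvex X ∧ HSProp X :=
  lur_iff_rotund_sluc_hs_general X
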